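/- Let X₁ and X₂ be degree-similar finite simple graphs. For i ∈ {1,2} choose uᵢ ∈ V(Xᵢ) such that: (i) no other vertex of Xᵢ has the same degree as uᵢ in Xᵢ; (ii) deg_{X₁}(u₁) = deg_{X₂}(u₂); and (iii) for every neighbor w of u₁ in X₁, every vertex w′ of X₁ with deg_{X₁}(w′) = deg_{X₁}(w) is also a neighbor of u₁. Then the vertex-deleted subgraphs X₁ ∖ u₁ and X₂ ∖ u₂ are degree similar. -/

import Mathlib

open Matrix

open Classical in
noncomputable def adjMat {V : Type*} (G : SimpleGraph V) : Matrix V V ℝ :=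
  Matrix.of fun a b => if G.Adj a b then 1 else 0

noncomputable def gdeg {V : Type*} (G : SimpleGraph V) (v : V) : ℕ :=
  Nat.card (G.neighborSet v)

noncomputable def degMat {V : Type*} [DecidableEq V] (G : SimpleGraph V) : Matrix V V ℝ :=
  Matrix.diagonal fun v => (gdeg G v : ℝ)

/-- Two graphs (on possibly different vertex types of the same cardinality) are
degree similar if there is an invertible real matrix conjugating the adjacency
matrix of the first to that of the second, and likewise for the degree matrices. -/
def DegreeSimilar {V W : Type*} [Fintype V] [Fintype W] [DecidableEq V] [DecidableEq W]
    (G : SimpleGraph V) (H : SimpleGraph W) : Prop :=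
  ∃ (e : V ≃ W) (M : Matrix V V ℝ), IsUnit M ∧
    M⁻¹ * adjMat G * M = (adjMat H).submatrix ⇑e ⇑e ∧
    M⁻¹ * degMat G * M = (degMat H).submatrix ⇑e ⇑e

/-!
Normalise the similarity `M` so that its vertex bijection sends `u₁` to `u₂`, and let `d₁, d₂` be
the degree vectors (`d₂` read through the bijection). Conjugating `diag d₁` to `diag d₂` forces `M p q = 0` unless `d₁ p = d₂ q`; since `u₂` is the only vertex of
its degree, row `u₁` of `M` and column `u₁` of `M⁻¹` vanish off the diagonal, and then deleting
row and column `u₁` from `M` gives a similarity between any two matrices with row and column `u₁`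
deleted.

The degree matrices of the deleted graphs are `D(Xᵢ) - diag(A(Xᵢ) uᵢ)` with `uᵢ` deleted. If `S` is
the set of degrees of neighbours of `u₁`, row `u₁` of `A(X₁)` is `𝟙_S ∘ d₁`. Comparing row `u₁` of
`A(X₁) M = M A(X₂)` shows that every neighbour of `u₂` has degree in `S`, and counting gives
equality: `#{v | d₁ v ∈ S} = #{v | d₂ v ∈ S}` as traces of the similar matrices `𝟙_S(D(X₁))` and
`𝟙_S(D(X₂))`, and `u₁, u₂` have the same degree. So both differences are `f(D(Xᵢ))` for
`f t = t - 𝟙_S t`, and these are conjugate by `M` as well.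
-/

namespace Matrix

variable {V R : Type*} [Fintype V]

section CommRing

variable [CommRing R]

theorem submatrix_val_mul_submatrix_val (s : Set V) [DecidablePred (· ∈ s)] (P Q : Matrix V V R)
    (h : ∀ i ∈ s, ∀ k ∈ s, ∀ p ∉ s, P i p * Q p k = 0) :
    (P.submatrix (↑) (↑) : Matrix s s R) * Q.submatrix (↑) (↑) = (P * Q).submatrix (↑) (↑) := by
  ext ⟨i, hi⟩ ⟨k, hk⟩
  rw [mul_apply, submatrix_apply, mul_apply, ← Fintype.sum_subtype_add_sum_subtype (· ∈ s),
    Fintype.sum_eq_zero (fun p : {p // p ∉ s} => _) fun p => h i hi k hk p p.2, add_zero]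
  rfl

variable [DecidableEq V] {M : Matrix V V R}

theorem inv_mul_mul_eq_iff (hM : IsUnit M) (A B : Matrix V V R) :
    M⁻¹ * A * M = B ↔ A * M = M * B := by
  have := hM.invertible
  rw [Matrix.mul_assoc, inv_mul_eq_iff_eq_mul_of_invertible]

theorem mul_inv_eq_inv_mul_of_mul_eq_mul (hM : IsUnit M) {A B : Matrix V V R}
    (h : A * M = M * B) : B * M⁻¹ = M⁻¹ * A := by
  have := hM.invertible
  rw [← inv_mul_cancel_left_of_invertible M B, ← h, Matrix.mul_assoc,
    mul_inv_cancel_right_of_invertible]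

theorem inv_submatrix_equiv_mul_mul (M A : Matrix V V R) (σ : V ≃ V) :
    (M.submatrix id σ)⁻¹ * A * M.submatrix id σ = (M⁻¹ * A * M).submatrix σ σ := by
  rw [show M.submatrix id σ = M.submatrix (Equiv.refl V) σ from rfl, inv_submatrix_equiv,
    ← submatrix_id_id A, ← Equiv.coe_refl, submatrix_mul_equiv, submatrix_mul_equiv,
    Equiv.coe_refl, submatrix_id_id]

theorem sum_eq_of_inv_mul_diagonal_mul (hM : IsUnit M) {d₁ d₂ : V → R}
    (h : M⁻¹ * diagonal d₁ * M = diagonal d₂) : ∑ i, d₁ i = ∑ i, d₂ i := by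
  simpa using (trace_conj' hM (diagonal d₁)).symm.trans (congrArg trace h)

theorem apply_self_ne_zero_of_row_eq_zero [Nontrivial R] (hM : IsUnit M) {u : V}
    (hrow : ∀ k ≠ u, M u k = 0) : M u u ≠ 0 := by
  intro h0
  have := congrFun₂ (mul_nonsing_inv M ((isUnit_iff_isUnit_det M).mp hM)) u u
  rw [mul_apply, Fintype.sum_eq_zero _ fun k => ?_, one_apply_eq] at this
  · exact zero_ne_one this
  · by_cases hk : k = u
    · rw [hk, h0, zero_mul]
    · rw [hrow k hk, zero_mul]

variable {s : Set V} [DecidablePred (· ∈ s)]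

theorem inv_submatrix_val_mul_submatrix_val (hM : IsUnit M) (hrow : ∀ p ∉ s, ∀ k ∈ s, M p k = 0) :
    (M⁻¹.submatrix (↑) (↑) : Matrix s s R) * M.submatrix (↑) (↑) = 1 := by
  rw [submatrix_val_mul_submatrix_val _ _ _ fun _ _ k hk p hp => by rw [hrow p hp k hk, mul_zero],
    nonsing_inv_mul _ ((isUnit_iff_isUnit_det M).mp hM), submatrix_one _ Subtype.val_injective]

theorem isUnit_submatrix_val (hM : IsUnit M) (hrow : ∀ p ∉ s, ∀ k ∈ s, M p k = 0) :
    IsUnit (M.submatrix (↑) (↑) : Matrix s s R) :=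
  isUnit_iff_exists_inv'.mpr ⟨_, inv_submatrix_val_mul_submatrix_val hM hrow⟩

theorem inv_submatrix_val_mul_mul (hM : IsUnit M) (hrow : ∀ p ∉ s, ∀ k ∈ s, M p k = 0)
    (hcol : ∀ i ∈ s, ∀ p ∉ s, M⁻¹ i p = 0) (A : Matrix V V R) :
    (M.submatrix (↑) (↑) : Matrix s s R)⁻¹ * A.submatrix (↑) (↑) * M.submatrix (↑) (↑) =
      (M⁻¹ * A * M).submatrix (↑) (↑) := by
  rw [inv_eq_left_inv (inv_submatrix_val_mul_submatrix_val hM hrow),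
    submatrix_val_mul_submatrix_val _ _ _ fun i hi _ _ p hp => by rw [hcol i hi p hp, zero_mul],
    submatrix_val_mul_submatrix_val _ _ _ fun _ _ k hk p hp => by rw [hrow p hp k hk, mul_zero]]

end CommRing

section NoZeroDivisors

variable [CommRing R] [NoZeroDivisors R] [DecidableEq V] {M : Matrix V V R} {d₁ d₂ : V → R}

theorem apply_eq_zero_of_diagonal_mul_eq (h : diagonal d₁ * M = M * diagonal d₂) {i j : V}
    (hij : d₁ i ≠ d₂ j) : M i j = 0 := by
  have := congrFun₂ h i j
  rw [diagonal_mul, mul_diagonal, mul_comm, ← sub_eq_zero, ← mul_sub] at this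
  exact (mul_eq_zero.mp this).resolve_right (sub_ne_zero.mpr hij)

theorem diagonal_comp_mul_eq (h : diagonal d₁ * M = M * diagonal d₂) (f : R → R) :
    diagonal (f ∘ d₁) * M = M * diagonal (f ∘ d₂) := by
  ext i j
  rw [diagonal_mul, mul_diagonal]
  by_cases hij : d₁ i = d₂ j
  · simp [hij, mul_comm]
  · simp [apply_eq_zero_of_diagonal_mul_eq h hij]

theorem apply_self_mul_apply_eq {A B : Matrix V V R} (hAB : A * M = M * B)
    (hD : diagonal d₁ * M = M * diagonal d₂) {u : V} (hrow : ∀ k ≠ u, M u k = 0) {g : R → R}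
    (hA : ∀ p, A u p = g (d₁ p)) (q : V) :
    M u u * B u q = (∑ p, M p q) * g (d₂ q) := by
  calc M u u * B u q = (M * B) u q := by
        rw [mul_apply, Fintype.sum_eq_single u fun k hk => by rw [hrow k hk, zero_mul]]
    _ = ∑ p, (diagonal (g ∘ d₁) * M) p q := by
        rw [← hAB, mul_apply]
        simp only [diagonal_mul, hA, Function.comp_apply]
    _ = (∑ p, M p q) * g (d₂ q) := by
        simp only [diagonal_comp_mul_eq hD, mul_diagonal, Finset.sum_mul]; rfl

end NoZeroDivisors

end Matrix

section Graph

variable {V : Type*} (G : SimpleGraph V)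

theorem adjMat_apply_comm (u w : V) : adjMat G u w = adjMat G w u := by
  rw [adjMat, of_apply, of_apply, G.adj_comm]

theorem adjMat_induce (s : Set V) : adjMat (G.induce s) = (adjMat G).submatrix (↑) (↑) :=
  rfl

theorem adjMat_apply_eq_indicator {u : V}
    (h : ∀ w, G.Adj u w → ∀ w', gdeg G w' = gdeg G w → G.Adj u w') (v : V) :
    adjMat G u v = ((fun w => (gdeg G w : ℝ)) '' G.neighborSet u).indicator 1 (gdeg G v : ℝ) := by
  by_cases hv : G.Adj u v
  · rw [Set.indicator_of_mem (Set.mem_image_of_mem (fun w => (gdeg G w : ℝ))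
      (show v ∈ G.neighborSet u from hv))]
    simp [adjMat, hv]
  · rw [Set.indicator_of_notMem]
    · simp [adjMat, hv]
    · rintro ⟨w, hw, hwv⟩
      exact hv (h w hw v (Nat.cast_injective hwv).symm)

variable [Fintype V]

theorem gdeg_eq_sum_adjMat (v : V) : (gdeg G v : ℝ) = ∑ w, adjMat G v w := by
  classical
  simp [gdeg, adjMat, Finset.sum_boole, SimpleGraph.neighborSet, Nat.card_eq_fintype_card,
    Fintype.card_subtype]

variable [DecidableEq V]

theorem gdeg_induce_ne (u w : V) (hw : w ≠ u) :
    (gdeg (G.induce {x | x ≠ u}) ⟨w, hw⟩ : ℝ) = gdeg G w - adjMat G u w := by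
  rw [gdeg_eq_sum_adjMat, gdeg_eq_sum_adjMat, Fintype.sum_eq_add_sum_subtype_ne _ u,
    adjMat_apply_comm G u w, adjMat_induce, add_sub_cancel_left]
  rfl

theorem degMat_induce_ne (u : V) :
    degMat (G.induce {x | x ≠ u}) = (degMat G - diagonal (adjMat G u)).submatrix (↑) (↑) := by
  rw [degMat, degMat, diagonal_sub, submatrix_diagonal _ _ Subtype.val_injective]
  congr 1
  funext ⟨w, hw⟩
  exact gdeg_induce_ne G u w hw

end Graph

theorem DegreeSimilar.exists_apply_eq {V W : Type*} [Fintype V] [Fintype W] [DecidableEq V]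
    [DecidableEq W] {G : SimpleGraph V} {H : SimpleGraph W} (h : DegreeSimilar G H) (v : V)
    (w : W) :
    ∃ (e : V ≃ W) (M : Matrix V V ℝ), e v = w ∧ IsUnit M ∧
      M⁻¹ * adjMat G * M = (adjMat H).submatrix e e ∧
      M⁻¹ * degMat G * M = (degMat H).submatrix e e := by
  obtain ⟨e, M, hM, hA, hD⟩ := h
  set σ := Equiv.swap v (e.symm w)
  refine ⟨σ.trans e, M.submatrix id σ, by simp [σ], ?_, ?_, ?_⟩
  · exact (isUnit_submatrix_equiv (Equiv.refl V) σ).mpr hM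
  · rw [inv_submatrix_equiv_mul_mul, hA, submatrix_submatrix]
    rfl
  · rw [inv_submatrix_equiv_mul_mul, hD, submatrix_submatrix]
    rfl

section DeleteVertex

variable {V W : Type*} [Fintype V] [DecidableEq V]
  {X₁ : SimpleGraph V} {X₂ : SimpleGraph W} {e : V ≃ W} {M : Matrix V V ℝ} {u : V} {S : Set ℝ}

theorem adjMat_apply_eq_indicator_of_conj [Fintype W] (hM : IsUnit M)
    (hA : M⁻¹ * adjMat X₁ * M = (adjMat X₂).submatrix e e)
    (hD : diagonal (fun v => (gdeg X₁ v : ℝ)) * M = M * diagonal (fun v => (gdeg X₂ (e v) : ℝ)))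
    (hrow : ∀ k ≠ u, M u k = 0) (hu : gdeg X₁ u = gdeg X₂ (e u))
    (hS : ∀ v, adjMat X₁ u v = S.indicator 1 (gdeg X₁ v : ℝ)) (v : V) :
    adjMat X₂ (e u) (e v) = S.indicator 1 (gdeg X₂ (e v) : ℝ) := by
  have hle : ∀ v, adjMat X₂ (e u) (e v) ≤ S.indicator 1 (gdeg X₂ (e v) : ℝ) := by
    intro v
    by_cases hadj : X₂.Adj (e u) (e v)
    · have key : M u u * adjMat X₂ (e u) (e v) =
          (∑ p, M p v) * S.indicator 1 (gdeg X₂ (e v) : ℝ) :=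
        apply_self_mul_apply_eq ((inv_mul_mul_eq_iff hM _ _).mp hA) hD hrow hS v
      have hne : S.indicator (1 : ℝ → ℝ) (gdeg X₂ (e v)) ≠ 0 := by
        intro h0
        apply apply_self_ne_zero_of_row_eq_zero hM hrow
        simpa [adjMat, hadj, h0] using key
      rw [Set.indicator_of_mem (Set.mem_of_indicator_ne_zero hne)]
      simp [adjMat, hadj]
    · simp only [adjMat, of_apply, if_neg hadj]
      exact Set.indicator_nonneg (fun _ _ => zero_le_one) _
  have hsum : ∑ v, adjMat X₂ (e u) (e v) = ∑ v, S.indicator 1 (gdeg X₂ (e v) : ℝ) :=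
    calc ∑ v, adjMat X₂ (e u) (e v) = gdeg X₂ (e u) := by rw [gdeg_eq_sum_adjMat, e.sum_comp]
    _ = gdeg X₁ u := by rw [hu]
    _ = ∑ v, S.indicator 1 (gdeg X₁ v : ℝ) := by
        rw [gdeg_eq_sum_adjMat]
        exact Finset.sum_congr rfl fun v _ => hS v
    _ = ∑ v, S.indicator 1 (gdeg X₂ (e v) : ℝ) :=
        sum_eq_of_inv_mul_diagonal_mul hM <|
          (inv_mul_mul_eq_iff hM _ _).mpr (diagonal_comp_mul_eq hD (S.indicator 1))
  exact (Finset.sum_eq_sum_iff_of_le fun v _ => hle v).mp hsum v (Finset.mem_univ v)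

theorem inv_mul_degMat_sub_diagonal_adjMat_mul [DecidableEq W] (hM : IsUnit M)
    (hD : diagonal (fun v => (gdeg X₁ v : ℝ)) * M = M * diagonal (fun v => (gdeg X₂ (e v) : ℝ)))
    (hS₁ : ∀ v, adjMat X₁ u v = S.indicator 1 (gdeg X₁ v : ℝ))
    (hS₂ : ∀ v, adjMat X₂ (e u) (e v) = S.indicator 1 (gdeg X₂ (e v) : ℝ)) :
    M⁻¹ * (degMat X₁ - diagonal (adjMat X₁ u)) * M =
      (degMat X₂ - diagonal (adjMat X₂ (e u))).submatrix e e := by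
  set f : ℝ → ℝ := fun t => t - S.indicator 1 t
  have h₁ : degMat X₁ - diagonal (adjMat X₁ u) = diagonal (f ∘ fun v => (gdeg X₁ v : ℝ)) := by
    rw [degMat, diagonal_sub]
    congr 1
    funext v
    simp [f, hS₁]
  have h₂ : (degMat X₂ - diagonal (adjMat X₂ (e u))).submatrix e e =
      diagonal (f ∘ fun v => (gdeg X₂ (e v) : ℝ)) := by
    rw [degMat, diagonal_sub, submatrix_diagonal_equiv]
    congr 1
    funext v
    simp [f, hS₂]
  rw [h₁, h₂, inv_mul_mul_eq_iff hM]
  exact diagonal_comp_mul_eq hD f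

end DeleteVertex

open Classical in
theorem degreeSimilar_deleteVertex_general {V : Type*} [Fintype V] [DecidableEq V]
    (X₁ X₂ : SimpleGraph V) (h : DegreeSimilar X₁ X₂) (u₁ u₂ : V)
    (h1' : ∀ x : V, gdeg X₂ x = gdeg X₂ u₂ → x = u₂)
    (h2 : gdeg X₁ u₁ = gdeg X₂ u₂)
    (h3 : ∀ w : V, X₁.Adj u₁ w → ∀ w' : V, gdeg X₁ w' = gdeg X₁ w → X₁.Adj u₁ w') :
    DegreeSimilar (X₁.induce {x | x ≠ u₁}) (X₂.induce {x | x ≠ u₂}) := by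
  obtain ⟨e, M, rfl, hM, hA, hD⟩ := h.exists_apply_eq u₁ u₂
  have hS₁ := adjMat_apply_eq_indicator X₁ h3
  have hdeg : diagonal (fun v => (gdeg X₁ v : ℝ)) * M =
      M * diagonal (fun v => (gdeg X₂ (e v) : ℝ)) := by
    rw [← inv_mul_mul_eq_iff hM]
    exact hD.trans (submatrix_diagonal_equiv _ e)
  have hdeg_ne : ∀ k ≠ u₁, (gdeg X₁ u₁ : ℝ) ≠ gdeg X₂ (e k) := fun k hk h =>
    hk (e.injective (h1' _ (by rw [← h2]; exact_mod_cast h.symm)))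
  have hrow : ∀ k ≠ u₁, M u₁ k = 0 := fun k hk =>
    apply_eq_zero_of_diagonal_mul_eq hdeg (hdeg_ne k hk)
  have hcol : ∀ i ≠ u₁, M⁻¹ i u₁ = 0 := fun i hi =>
    apply_eq_zero_of_diagonal_mul_eq (mul_inv_eq_inv_mul_of_mul_eq_mul hM hdeg) (hdeg_ne i hi).symm
  have hS₂ := adjMat_apply_eq_indicator_of_conj hM hA hdeg hrow h2 hS₁
  have hrow' : ∀ p ∉ {x | x ≠ u₁}, ∀ k ∈ {x | x ≠ u₁}, M p k = 0 := fun p hp k hk =>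
    not_not.mp hp ▸ hrow k hk
  have hcol' : ∀ i ∈ {x | x ≠ u₁}, ∀ p ∉ {x | x ≠ u₁}, M⁻¹ i p = 0 := fun i hi p hp =>
    not_not.mp hp ▸ hcol i hi
  refine ⟨e.subtypeEquiv fun v => e.injective.ne_iff.symm, M.submatrix (↑) (↑),
    isUnit_submatrix_val hM hrow', ?_, ?_⟩
  · rw [adjMat_induce, adjMat_induce, inv_submatrix_val_mul_mul hM hrow' hcol', hA]
    rfl
  · rw [degMat_induce_ne, degMat_induce_ne, inv_submatrix_val_mul_mul hM hrow' hcol',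
      inv_mul_degMat_sub_diagonal_adjMat_mul hM hdeg hS₁ hS₂]
    rfl

open Classical in
/-- Let `X₁, X₂` be degree similar, and for `i = 1, 2` let `uᵢ` be a vertex of `Xᵢ`
such that: no other vertex of `Xᵢ` has the same degree as `uᵢ`; the degrees of `u₁`
and `u₂` agree; and the neighbourhood of `u₁` in `X₁` is a union of degree classes.
Then the vertex-deleted subgraphs `X₁ ∖ u₁` and `X₂ ∖ u₂` are degree similar. -/
theorem degreeSimilar_deleteVertex {V : Type*} [Fintype V] [DecidableEq V]
    (X₁ X₂ : SimpleGraph V) (h : DegreeSimilar X₁ X₂) (u₁ u₂ : V)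
    (h1 : ∀ x : V, gdeg X₁ x = gdeg X₁ u₁ → x = u₁)
    (h1' : ∀ x : V, gdeg X₂ x = gdeg X₂ u₂ → x = u₂)
    (h2 : gdeg X₁ u₁ = gdeg X₂ u₂)
    (h3 : ∀ w : V, X₁.Adj u₁ w → ∀ w' : V, gdeg X₁ w' = gdeg X₁ w → X₁.Adj u₁ w') :
    DegreeSimilar (X₁.induce {x | x ≠ u₁}) (X₂.induce {x | x ≠ u₂}) :=
  degreeSimilar_deleteVertex_general X₁ X₂ h u₁ u₂ h1' h2 h3
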